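/- Let $\phi$ and $\omega$ be non-negative non-decreasing functions on an interval $(0,R_0]$. Suppose there are constants $C_1>0$ and $s>0$ such that $\omega(\lambda r)/\omega(r) \ge C_1 \lambda^s$ for all $0<\lambda\le 1$ and $0<r\le R_0$. Let $\beta<0$ and $\delta>0$, and suppose there exist a constant $A_1>1$ and a function $A_2:(0,\infty)\to(0,\infty)$ such that for every $0<r<R\le R_0$ and every $0<\varepsilon<1$, $\phi(r) \le A_1\,[\,(\omega(r)/\omega(R))\,(r/R)^{\beta+\delta} + \varepsilon\,]\,\phi(R) + A_2(\varepsilon)\,\omega(R)\,R^{\beta}$. Then there exist positive constants $C$ and $\varepsilon_0$, depending only on $C_1$, $s$, $A_1$, $\beta$, and $\delta$, such that for all $0<r<R\le R_0$, $\phi(r) \le C\,[\,(\omega(r)/\omega(R))\,(r/R)^{\beta}\,\phi(R) + A_2(\varepsilon_0)\,\omega(r)\,r^{\beta}\,]$. -/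

import Mathlib

/-!
Choose `λ ∈ (0, 1)` with `4 A₁ λ^δ = 1` and `ε₀ ≤ C₁ λ^(s+β+δ)`. Applied to the radii `λρ < ρ`,
the hypothesis together with `ω(λρ) ≥ C₁ λ^s ω(ρ)` says that `ψ(ρ) = φ(ρ) / (ω(ρ) ρ^β)` satisfies
`ψ(λρ) ≤ ψ(ρ) / 2 + K` with `K = A₂(ε₀) / (C₁ λ^(s+β))`, so `ψ(λ^k R) ≤ max (ψ R) (2K)` for all
`k`. A radius `r < R` lies in some `(λ^(k+1) R, λ^k R]`; there the monotonicity of `φ`, the lower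
scaling of `ω` and `β ≤ 0` transfer the bound from `λ^k R` to `r` at the cost of `1 / (C₁ λ^s)`.
-/

open Real

def LowerScaling (ω : ℝ → ℝ) (R₀ C₁ s : ℝ) : Prop :=
  ∀ lam r, 0 < lam → lam ≤ 1 → 0 < r → r ≤ R₀ → C₁ * lam ^ s ≤ ω (lam * r) / ω r

noncomputable def modelRatio (φ ω : ℝ → ℝ) (β ρ : ℝ) : ℝ := φ ρ / (ω ρ * ρ ^ β)

theorem le_max_of_forall_le_mul_add {a : ℕ → ℝ} {c M : ℝ} (hc₀ : 0 ≤ c) (hc₁ : c < 1)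
    (h : ∀ k, a (k + 1) ≤ c * a k + M) (k : ℕ) : a k ≤ max (a 0) (M / (1 - c)) := by
  set X := max (a 0) (M / (1 - c))
  have hMX : M ≤ (1 - c) * X := by
    rw [← div_le_iff₀' (by linarith)]
    exact le_max_right _ _
  induction k with
  | zero => exact le_max_left _ _
  | succ k ih => nlinarith [h k]

theorem apply_pow_mul_le_max_of_forall_le_mul_add {f : ℝ → ℝ} {R₀ lam c M : ℝ}
    (hlam₀ : 0 < lam) (hlam₁ : lam ≤ 1) (hc₀ : 0 ≤ c) (hc₁ : c < 1)
    (h : ∀ ρ, 0 < ρ → ρ ≤ R₀ → f (lam * ρ) ≤ c * f ρ + M)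
    {R : ℝ} (hR : 0 < R) (hRR₀ : R ≤ R₀) (k : ℕ) :
    f (lam ^ k * R) ≤ max (f R) (M / (1 - c)) := by
  have hscale : ∀ k : ℕ, 0 < lam ^ k * R ∧ lam ^ k * R ≤ R₀ := fun k =>
    ⟨by positivity, (mul_le_of_le_one_left hR.le (pow_le_one₀ hlam₀.le hlam₁)).trans hRR₀⟩
  simpa using le_max_of_forall_le_mul_add (a := fun k => f (lam ^ k * R)) hc₀ hc₁
    (fun k => by simpa only [pow_succ', mul_assoc] using h _ (hscale k).1 (hscale k).2) k

theorem modelRatio_mul_mul_rpow (φ ω : ℝ → ℝ) (β : ℝ) {r R : ℝ} (hr : 0 ≤ r) (hR : 0 ≤ R) :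
    modelRatio φ ω β R * (ω r * r ^ β) = ω r / ω R * (r / R) ^ β * φ R := by
  rw [modelRatio, div_rpow hr hR]
  ring

section

variable {φ ω : ℝ → ℝ} {R₀ C₁ s : ℝ}

theorem LowerScaling.pos (h : LowerScaling ω R₀ C₁ s) (hC₁ : 0 < C₁)
    (hω₀ : ∀ r, 0 < r → r ≤ R₀ → 0 ≤ ω r) {r : ℝ} (hr : 0 < r) (hrR₀ : r ≤ R₀) : 0 < ω r := by
  refine (hω₀ r hr hrR₀).lt_of_ne' fun h₀ => ?_
  -- with `ω r = 0` the junk value `ω r / ω r = 0` contradicts `C₁ ≤ ω r / ω r`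
  have := h 1 r one_pos le_rfl hr hrR₀
  simp only [one_rpow, mul_one, one_mul, h₀, div_zero] at this
  linarith

theorem LowerScaling.mul_rpow_mul_le (h : LowerScaling ω R₀ C₁ s) (hC₁ : 0 < C₁)
    (hω₀ : ∀ r, 0 < r → r ≤ R₀ → 0 ≤ ω r) (hs : 0 ≤ s) {lam r ρ : ℝ} (hlam : 0 < lam)
    (hr : 0 < r) (hlr : lam * ρ ≤ r) (hrρ : r ≤ ρ) (hρR₀ : ρ ≤ R₀) :
    C₁ * lam ^ s * ω ρ ≤ ω r := by
  have hρ : 0 < ρ := hr.trans_le hrρ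
  have hratio := h (r / ρ) ρ (by positivity) ((div_le_one hρ).2 hrρ) hρ hρR₀
  rw [div_mul_cancel₀ r hρ.ne', le_div_iff₀ (h.pos hC₁ hω₀ hρ hρR₀)] at hratio
  have hω₀ρ := hω₀ ρ hρ hρR₀
  calc C₁ * lam ^ s * ω ρ ≤ C₁ * (r / ρ) ^ s * ω ρ := by
        gcongr
        rwa [le_div_iff₀ hρ]
    _ ≤ ω r := hratio

theorem LowerScaling.apply_mul_le_of_forall_le (h : LowerScaling ω R₀ C₁ s) (hC₁ : 0 ≤ C₁)
    (hφ₀ : ∀ r, 0 < r → r ≤ R₀ → 0 ≤ φ r) {β δ A₁ ε B lam c : ℝ} (hA₁ : 0 ≤ A₁)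
    (hlam₀ : 0 < lam) (hlam₁ : lam < 1) (hε : ε ≤ C₁ * lam ^ (s + β + δ))
    (hc : 2 * A₁ * lam ^ δ ≤ c)
    (hmain : ∀ r R, 0 < r → r < R → R ≤ R₀ →
      φ r ≤ A₁ * (ω r / ω R * (r / R) ^ (β + δ) + ε) * φ R + B * ω R * R ^ β)
    {ρ : ℝ} (hρ : 0 < ρ) (hρR₀ : ρ ≤ R₀) :
    φ (lam * ρ) ≤ c * (ω (lam * ρ) / ω ρ) * lam ^ β * φ ρ + B * ω ρ * ρ ^ β := by
  set q := ω (lam * ρ) / ω ρ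
  have hq : C₁ * lam ^ s ≤ q := h lam ρ hlam₀ hlam₁.le hρ hρR₀
  have hεq : ε ≤ q * lam ^ (β + δ) :=
    calc ε ≤ C₁ * lam ^ s * lam ^ (β + δ) := by rwa [mul_assoc, ← rpow_add hlam₀, ← add_assoc]
      _ ≤ q * lam ^ (β + δ) := by gcongr
  have hcoef : A₁ * (q * lam ^ (β + δ) + ε) ≤ c * q * lam ^ β :=
    calc A₁ * (q * lam ^ (β + δ) + ε) ≤ A₁ * (2 * (q * lam ^ (β + δ))) := by gcongr; linarith
      _ = 2 * A₁ * lam ^ δ * (q * lam ^ β) := by rw [rpow_add hlam₀]; ring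
      _ ≤ c * q * lam ^ β := by
        rw [mul_assoc c]
        have : 0 ≤ q := hq.trans' (by positivity)
        gcongr
  have hmainρ := hmain (lam * ρ) ρ (by positivity) (mul_lt_of_lt_one_left hρ hlam₁) hρR₀
  rw [mul_div_cancel_right₀ lam hρ.ne'] at hmainρ
  calc φ (lam * ρ) ≤ A₁ * (q * lam ^ (β + δ) + ε) * φ ρ + B * ω ρ * ρ ^ β := hmainρ
    _ ≤ c * q * lam ^ β * φ ρ + B * ω ρ * ρ ^ β :=
      add_le_add_left (mul_le_mul_of_nonneg_right hcoef (hφ₀ ρ hρ hρR₀)) _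

theorem LowerScaling.modelRatio_mul_le_mul_add (h : LowerScaling ω R₀ C₁ s) (hC₁ : 0 < C₁)
    (hω₀ : ∀ r, 0 < r → r ≤ R₀ → 0 ≤ ω r) {β lam c B : ℝ} (hlam₀ : 0 < lam) (hlam₁ : lam ≤ 1)
    (hB : 0 ≤ B) {ρ : ℝ} (hρ : 0 < ρ) (hρR₀ : ρ ≤ R₀)
    (hstep : φ (lam * ρ) ≤ c * (ω (lam * ρ) / ω ρ) * lam ^ β * φ ρ + B * ω ρ * ρ ^ β) :
    modelRatio φ ω β (lam * ρ) ≤ c * modelRatio φ ω β ρ + B / (C₁ * lam ^ (s + β)) := by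
  have hωρ := h.pos hC₁ hω₀ hρ hρR₀
  have hωlρ := h.pos hC₁ hω₀ (mul_pos hlam₀ hρ) ((mul_le_of_le_one_left hρ.le hlam₁).trans hρR₀)
  have hcmp : ω ρ ≤ ω (lam * ρ) / (C₁ * lam ^ s) := by
    rw [le_div_iff₀' (by positivity), ← le_div_iff₀ hωρ]
    exact h lam ρ hlam₀ hlam₁ hρ hρR₀
  unfold modelRatio
  rw [div_le_iff₀ (by positivity)]
  calc φ (lam * ρ) ≤ c * (ω (lam * ρ) / ω ρ) * lam ^ β * φ ρ + B * ω ρ * ρ ^ β := hstep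
    _ ≤ c * (ω (lam * ρ) / ω ρ) * lam ^ β * φ ρ + B * (ω (lam * ρ) / (C₁ * lam ^ s)) * ρ ^ β := by
      gcongr
    _ = (c * (φ ρ / (ω ρ * ρ ^ β)) + B / (C₁ * lam ^ (s + β))) * (ω (lam * ρ) * (lam * ρ) ^ β) := by
      rw [rpow_add hlam₀, mul_rpow hlam₀.le hρ.le]
      field_simp

theorem LowerScaling.le_div_mul_of_modelRatio_le (h : LowerScaling ω R₀ C₁ s) (hC₁ : 0 < C₁)
    (hω₀ : ∀ r, 0 < r → r ≤ R₀ → 0 ≤ ω r) (hs : 0 ≤ s)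
    (hφmono : ∀ r₁ r₂, 0 < r₁ → r₁ ≤ r₂ → r₂ ≤ R₀ → φ r₁ ≤ φ r₂) {β lam r ρ P : ℝ}
    (hβ : β ≤ 0) (hlam : 0 < lam) (hr : 0 < r) (hlr : lam * ρ ≤ r) (hrρ : r ≤ ρ) (hρR₀ : ρ ≤ R₀)
    (hP : modelRatio φ ω β ρ ≤ P) (hP₀ : 0 ≤ P) :
    φ r ≤ P / (C₁ * lam ^ s) * (ω r * r ^ β) := by
  have hρ : 0 < ρ := hr.trans_le hrρ
  have hωρ := h.pos hC₁ hω₀ hρ hρR₀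
  have hcmp : ω ρ ≤ ω r / (C₁ * lam ^ s) := by
    rw [le_div_iff₀' (by positivity)]
    exact h.mul_rpow_mul_le hC₁ hω₀ hs hlam hr hlr hrρ hρR₀
  calc φ r ≤ φ ρ := hφmono r ρ hr hrρ hρR₀
    _ ≤ P * (ω ρ * ρ ^ β) := (div_le_iff₀ (by positivity)).1 hP
    _ ≤ P * (ω r / (C₁ * lam ^ s) * r ^ β) := mul_le_mul_of_nonneg_left
        (mul_le_mul hcmp (rpow_le_rpow_of_nonpos hr hrρ hβ) (by positivity) (hωρ.le.trans hcmp))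
        hP₀
    _ = P / (C₁ * lam ^ s) * (ω r * r ^ β) := by ring

theorem LowerScaling.le_of_forall_modelRatio_pow_mul_le (h : LowerScaling ω R₀ C₁ s)
    (hC₁ : 0 < C₁) (hω₀ : ∀ r, 0 < r → r ≤ R₀ → 0 ≤ ω r) (hs : 0 ≤ s)
    (hφ₀ : ∀ r, 0 < r → r ≤ R₀ → 0 ≤ φ r)
    (hφmono : ∀ r₁ r₂, 0 < r₁ → r₁ ≤ r₂ → r₂ ≤ R₀ → φ r₁ ≤ φ r₂) {β lam R B N : ℝ}
    (hβ : β ≤ 0) (hlam₀ : 0 < lam) (hlam₁ : lam < 1) (hRR₀ : R ≤ R₀) (hB : 0 ≤ B) (hN : 0 ≤ N)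
    (hscale : ∀ k : ℕ, modelRatio φ ω β (lam ^ k * R) ≤ max (modelRatio φ ω β R) (N * B))
    {r : ℝ} (hr : 0 < r) (hrR : r < R) :
    φ r ≤ (1 + N) / (C₁ * lam ^ s) * (ω r / ω R * (r / R) ^ β * φ R + B * ω r * r ^ β) := by
  have hR := hr.trans hrR
  obtain ⟨k, hk₁, hk⟩ :=
    exists_nat_pow_near_of_lt_one (div_pos hr hR) ((div_le_one hR).2 hrR.le) hlam₀ hlam₁
  rw [lt_div_iff₀ hR, pow_succ', mul_assoc] at hk₁
  rw [div_le_iff₀ hR] at hk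
  have hρR₀ : lam ^ k * R ≤ R₀ :=
    (mul_le_of_le_one_left hR.le (pow_le_one₀ hlam₀.le hlam₁.le)).trans hRR₀
  have hX : 0 ≤ ω r * r ^ β := mul_nonneg (hω₀ r hr (hrR.le.trans hRR₀)) (rpow_nonneg hr.le β)
  have hψR : 0 ≤ modelRatio φ ω β R :=
    div_nonneg (hφ₀ R hR hRR₀) (mul_nonneg (hω₀ R hR hRR₀) (rpow_nonneg hR.le β))
  calc φ r ≤ (modelRatio φ ω β R + N * B) / (C₁ * lam ^ s) * (ω r * r ^ β) :=
        h.le_div_mul_of_modelRatio_le hC₁ hω₀ hs hφmono hβ hlam₀ hr hk₁.le hk hρR₀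
          ((hscale k).trans (max_le_add_of_nonneg hψR (mul_nonneg hN hB))) (by positivity)
    _ ≤ (1 + N) / (C₁ * lam ^ s) * (modelRatio φ ω β R * (ω r * r ^ β) + B * (ω r * r ^ β)) := by
      rw [div_mul_eq_mul_div, div_mul_eq_mul_div]
      refine div_le_div_of_nonneg_right ?_ (by positivity)
      nlinarith [mul_nonneg hN (mul_nonneg hψR hX), mul_nonneg hB hX]
    _ = _ := by rw [modelRatio_mul_mul_rpow φ ω β hr.le hR.le]; ring

end

theorem iteration_lemma_general
    (R₀ : ℝ)
    (φ ω : ℝ → ℝ)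
    (hφ0 : ∀ r, 0 < r → r ≤ R₀ → 0 ≤ φ r)
    (hω0 : ∀ r, 0 < r → r ≤ R₀ → 0 ≤ ω r)
    (hφmono : ∀ r₁ r₂, 0 < r₁ → r₁ ≤ r₂ → r₂ ≤ R₀ → φ r₁ ≤ φ r₂)
    (C₁ s : ℝ) (hC₁ : 0 < C₁) (hs : 0 < s)
    (hω : ∀ lam r, 0 < lam → lam ≤ 1 → 0 < r → r ≤ R₀ →
      C₁ * lam ^ s ≤ ω (lam * r) / ω r)
    (β δ : ℝ) (hβ : β < 0) (hδ : 0 < δ)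
    (A₁ : ℝ) (hA₁ : 1 < A₁)
    (A₂ : ℝ → ℝ) (hA₂ : ∀ ε, 0 < ε → 0 < A₂ ε)
    (hmain : ∀ r R ε, 0 < r → r < R → R ≤ R₀ → 0 < ε → ε < 1 →
      φ r ≤ A₁ * (ω r / ω R * (r / R) ^ (β + δ) + ε) * φ R + A₂ ε * ω R * R ^ β) :
    ∃ C ε₀ : ℝ, 0 < C ∧ 0 < ε₀ ∧
      ∀ r R, 0 < r → r < R → R ≤ R₀ →
        φ r ≤ C * (ω r / ω R * (r / R) ^ β * φ R + A₂ ε₀ * ω r * r ^ β) := by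
  replace hω : LowerScaling ω R₀ C₁ s := hω
  obtain ⟨lam, hlam₀, hlam₁, hlamδ⟩ : ∃ lam : ℝ, 0 < lam ∧ lam < 1 ∧ lam ^ δ = (4 * A₁)⁻¹ :=
    ⟨(4 * A₁)⁻¹ ^ δ⁻¹, by positivity,
      rpow_lt_one (by positivity) (inv_lt_one_of_one_lt₀ (by linarith)) (inv_pos.2 hδ),
      rpow_inv_rpow (by positivity) hδ.ne'⟩
  set ε₀ := min (C₁ * lam ^ (s + β + δ)) (1 / 2)
  have hε₀ : 0 < ε₀ := lt_min (by positivity) one_half_pos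
  have hB : 0 ≤ A₂ ε₀ := (hA₂ ε₀ hε₀).le
  have hε₀₁ : ε₀ < 1 := (min_le_right _ _).trans_lt (by norm_num)
  have hstep (ρ : ℝ) (hρ : 0 < ρ) (hρR₀ : ρ ≤ R₀) :
      modelRatio φ ω β (lam * ρ) ≤ 2⁻¹ * modelRatio φ ω β ρ + A₂ ε₀ / (C₁ * lam ^ (s + β)) :=
    hω.modelRatio_mul_le_mul_add hC₁ hω0 hlam₀ hlam₁.le hB hρ hρR₀ <|
      hω.apply_mul_le_of_forall_le hC₁.le hφ0 (by linarith) hlam₀ hlam₁ (min_le_left _ _)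
        (by rw [hlamδ]; field_simp; norm_num)
        (fun r R hr hrR hR => hmain r R ε₀ hr hrR hR hε₀ hε₀₁) hρ hρR₀
  refine ⟨(1 + 2 / (C₁ * lam ^ (s + β))) / (C₁ * lam ^ s), ε₀, by positivity, hε₀,
    fun r R hr hrR hRR₀ => ?_⟩
  refine hω.le_of_forall_modelRatio_pow_mul_le hC₁ hω0 hs.le hφ0 hφmono hβ.le hlam₀ hlam₁ hRR₀ hB
    (by positivity) (fun k => ?_) hr hrR
  convert apply_pow_mul_le_max_of_forall_le_mul_add hlam₀ hlam₁.le (by norm_num) (by norm_num)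
    hstep (hr.trans hrR) hRR₀ k using 2
  ring

/-- Giaquinta-type iteration lemma (Lemma 3.3 / Lemma 2.7 of Mäkäläinen-type) for
non-Ahlfors-regular measures. -/
theorem iteration_lemma
    (R₀ : ℝ) (hR₀ : 0 < R₀)
    (φ ω : ℝ → ℝ)
    (hφ0 : ∀ r, 0 < r → r ≤ R₀ → 0 ≤ φ r)
    (hω0 : ∀ r, 0 < r → r ≤ R₀ → 0 ≤ ω r)
    (hφmono : ∀ r₁ r₂, 0 < r₁ → r₁ ≤ r₂ → r₂ ≤ R₀ → φ r₁ ≤ φ r₂)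
    (hωmono : ∀ r₁ r₂, 0 < r₁ → r₁ ≤ r₂ → r₂ ≤ R₀ → ω r₁ ≤ ω r₂)
    (C₁ s : ℝ) (hC₁ : 0 < C₁) (hs : 0 < s)
    (hω : ∀ lam r, 0 < lam → lam ≤ 1 → 0 < r → r ≤ R₀ →
      C₁ * lam ^ s ≤ ω (lam * r) / ω r)
    (β δ : ℝ) (hβ : β < 0) (hδ : 0 < δ)
    (A₁ : ℝ) (hA₁ : 1 < A₁)
    (A₂ : ℝ → ℝ) (hA₂ : ∀ ε, 0 < ε → 0 < A₂ ε)
    (hmain : ∀ r R ε, 0 < r → r < R → R ≤ R₀ → 0 < ε → ε < 1 →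
      φ r ≤ A₁ * (ω r / ω R * (r / R) ^ (β + δ) + ε) * φ R + A₂ ε * ω R * R ^ β) :
    ∃ C ε₀ : ℝ, 0 < C ∧ 0 < ε₀ ∧
      ∀ r R, 0 < r → r < R → R ≤ R₀ →
        φ r ≤ C * (ω r / ω R * (r / R) ^ β * φ R + A₂ ε₀ * ω r * r ^ β) :=
  iteration_lemma_general R₀ φ ω hφ0 hω0 hφmono C₁ s hC₁ hs hω β δ hβ hδ A₁ hA₁ A₂ hA₂ hmain
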